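/- Let A ⊆ B be positive affine semigroups in ℕ^m with C(A) = C(B).ated Then every coset of G(A) in G(B) contains an element of B; equivalently, the image of B in the finite group G(B)/G(A) is the whole group. -/

import Mathlib

open scoped BigOperators

/-!
Clearing denominators in a cone representation shows that, because `C(A) = C(B)`, every `b ∈ B`
has a positive multiple `(j + 1) • b ∈ A`. Hence for `b₁, b₂ ∈ B` the element `b₁ + j • b₂ ∈ B`
lies in the coset `b₁ - b₂ + G(A)`, and every element of `G(B)` has the form `b₁ - b₂`.
-/

/-- The coordinatewise cast `ℕ^m → ℤ^m`. -/
def ntz {m : ℕ} (x : Fin m → ℕ) : Fin m → ℤ := fun i => (x i : ℤ)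

/-- The coordinatewise cast `ℕ^m → ℚ^m`. -/
def ntq {m : ℕ} (x : Fin m → ℕ) : Fin m → ℚ := fun i => (x i : ℚ)

/-- `G(S)`: the subgroup of `ℤ^m` generated by an affine semigroup `S ⊆ ℕ^m`. -/
def grp {m : ℕ} (S : AddSubmonoid (Fin m → ℕ)) : AddSubgroup (Fin m → ℤ) :=
  AddSubgroup.closure (ntz '' (S : Set (Fin m → ℕ)))

/-- `C(S)`: the cone in `ℚ^m` generated by `S`, i.e. all nonnegative rational
linear combinations of elements of `S`. -/
def cone {m : ℕ} (S : AddSubmonoid (Fin m → ℕ)) : Set (Fin m → ℚ) :=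
  {x | ∃ (n : ℕ) (c : Fin n → ℚ) (v : Fin n → Fin m → ℕ),
    (∀ i, 0 ≤ c i) ∧ (∀ i, v i ∈ S) ∧ x = ∑ i, c i • ntq (v i)}

/-- `B_A := {x ∈ B : x ∉ B + (A \ {0})}`. -/
def BA {m : ℕ} (A B : AddSubmonoid (Fin m → ℕ)) : Set (Fin m → ℕ) :=
  {x | x ∈ B ∧ ¬ ∃ b ∈ B, ∃ a ∈ A, a ≠ 0 ∧ x = b + a}

lemma exists_pos_nat_mul_eq_natCast {ι : Type*} [Fintype ι] (c : ι → ℚ) (hc : ∀ i, 0 ≤ c i) :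
    ∃ N : ℕ, 0 < N ∧ ∃ w : ι → ℕ, ∀ i, (w i : ℚ) = N * c i := by
  refine ⟨∏ i, (c i).den, Finset.prod_pos fun i _ => (c i).pos,
    fun i => (∏ j, (c j).den) / (c i).den * (c i).num.toNat, fun i => ?_⟩
  have hdvd : (c i).den ∣ ∏ j, (c j).den := Finset.dvd_prod_of_mem _ (Finset.mem_univ i)
  have hnum : ((c i).num.toNat : ℚ) = (c i).num := by
    exact_mod_cast Int.toNat_of_nonneg (Rat.num_nonneg.mpr (hc i))
  push_cast [Nat.cast_div hdvd (Nat.cast_ne_zero.mpr (c i).den_nz)]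
  rw [hnum, ← Rat.mul_den_eq_num]
  field_simp

section Casts

variable {m : ℕ}

lemma ntz_add (x y : Fin m → ℕ) : ntz (x + y) = ntz x + ntz y := by
  funext i; simp [ntz]

lemma ntz_nsmul (k : ℕ) (x : Fin m → ℕ) : ntz (k • x) = k • ntz x := by
  funext i; simp [ntz]

lemma ntq_injective : Function.Injective (ntq (m := m)) :=
  Function.Injective.comp_left Nat.cast_injective

def ntqHom (m : ℕ) : (Fin m → ℕ) →+ (Fin m → ℚ) where
  toFun := ntq
  map_zero' := by funext i; simp [ntq]
  map_add' x y := by funext i; simp [ntq]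

end Casts

section Semigroup

variable {m : ℕ} {S : AddSubmonoid (Fin m → ℕ)}

lemma exists_eq_ntz_sub_of_mem_grp {x : Fin m → ℤ} (hx : x ∈ grp S) :
    ∃ b₁ ∈ S, ∃ b₂ ∈ S, x = ntz b₁ - ntz b₂ := by
  induction hx using AddSubgroup.closure_induction with
  | mem y hy =>
    obtain ⟨b, hb, rfl⟩ := hy
    exact ⟨b, hb, 0, S.zero_mem, by funext i; simp [ntz]⟩
  | zero => exact ⟨0, S.zero_mem, 0, S.zero_mem, by simp⟩
  | add _ _ _ _ hx hy =>
    obtain ⟨a₁, ha₁, a₂, ha₂, rfl⟩ := hx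
    obtain ⟨b₁, hb₁, b₂, hb₂, rfl⟩ := hy
    exact ⟨a₁ + b₁, S.add_mem ha₁ hb₁, a₂ + b₂, S.add_mem ha₂ hb₂, by
      rw [ntz_add, ntz_add]; abel⟩
  | neg _ _ hx =>
    obtain ⟨a₁, ha₁, a₂, ha₂, rfl⟩ := hx
    exact ⟨a₂, ha₂, a₁, ha₁, by abel⟩

lemma ntq_mem_cone {b : Fin m → ℕ} (hb : b ∈ S) : ntq b ∈ cone S :=
  ⟨1, fun _ => 1, fun _ => b, fun _ => zero_le_one, fun _ => hb, by simp⟩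

lemma exists_pos_nsmul_mem_of_ntq_mem_cone {b : Fin m → ℕ} (hb : ntq b ∈ cone S) :
    ∃ k : ℕ, 0 < k ∧ k • b ∈ S := by
  obtain ⟨n, c, v, hc, hv, hbc⟩ := hb
  obtain ⟨N, hN, w, hw⟩ := exists_pos_nat_mul_eq_natCast c hc
  refine ⟨N, hN, ?_⟩
  have hNb : N • b = ∑ i, w i • v i := by
    apply ntq_injective
    change ntqHom m (N • b) = ntqHom m (∑ i, w i • v i)
    simp only [map_nsmul, map_sum]
    change N • ntq b = ∑ i, w i • ntq (v i)
    simp only [hbc, Finset.smul_sum, ← Nat.cast_smul_eq_nsmul ℚ, smul_smul, hw]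
  rw [hNb]
  exact S.sum_mem fun i _ => S.nsmul_mem (hv i) _

end Semigroup

theorem stmt4_general {m : ℕ} (A B : AddSubmonoid (Fin m → ℕ))
    (hcone : cone A = cone B) :
    ∀ x ∈ grp B, ∃ b ∈ B, ntz b - x ∈ grp A := by
  intro x hx
  obtain ⟨b₁, hb₁, b₂, hb₂, rfl⟩ := exists_eq_ntz_sub_of_mem_grp hx
  obtain ⟨k, hk, hkA⟩ := exists_pos_nsmul_mem_of_ntq_mem_cone (hcone ▸ ntq_mem_cone hb₂)
  obtain ⟨j, rfl⟩ := Nat.exists_eq_add_one_of_ne_zero hk.ne'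
  refine ⟨b₁ + j • b₂, B.add_mem hb₁ (B.nsmul_mem hb₂ j), ?_⟩
  have hcoset : ntz (b₁ + j • b₂) - (ntz b₁ - ntz b₂) = ntz ((j + 1) • b₂) := by
    rw [ntz_add, ntz_nsmul, ntz_nsmul, succ_nsmul]
    abel
  rw [hcoset]
  exact AddSubgroup.subset_closure ⟨_, hkA, rfl⟩

/-- Let `A ⊆ B` be positive affine semigroups in `ℕ^m` with `C(A) = C(B)`.
Then every coset of `G(A)` in `G(B)` contains an element of `B`. -/
theorem stmt4 {m : ℕ} (A B : AddSubmonoid (Fin m → ℕ)) (hAfg : A.FG) (hBfg : B.FG)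
    (hAB : A ≤ B) (hcone : cone A = cone B) :
    ∀ x ∈ grp B, ∃ b ∈ B, ntz b - x ∈ grp A :=
  stmt4_general A B hcone
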